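/- arXiv:2502.02455 — 3 statements merged into one kernel-verified Lean document; each statement's English description precedes it below -/
import Mathlib

section
/- Suppose there are constants c > 0, ε ∈ (0,1), C > 0 such that for all sufficiently large n, ORS(n, ⌈εn⌉) ≥ C·n^c. Then for every fixed δ > 0 there exist constants ε' > 0 (one may take ε' = Θ(ε^{⌈1/δ⌉})) and C' > 0 such that for all sufficiently large n, RS(n, ⌈ε'·n⌉) ≥ C'·n^{c(1−δ)}. -/
/-- `M` is a family of `t` edge-disjoint matchings, each of size `r`,
partitioning the edge set of the simple graph `G` on `n` vertices. -/
def MatchingDecomp {n t : ℕ} (r : ℕ) (G : SimpleGraph (Fin n))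
    (M : Fin t → Finset (Sym2 (Fin n))) : Prop :=
  (∀ i, (M i).card = r) ∧
  (∀ i, ↑(M i) ⊆ G.edgeSet) ∧
  (∀ i, ∀ e ∈ M i, ∀ e' ∈ M i, e ≠ e' → ∀ v : Fin n, v ∈ e → v ∉ e') ∧
  (∀ i j, i ≠ j → Disjoint (M i) (M j)) ∧
  (∀ e ∈ G.edgeSet, ∃ i, e ∈ M i)

/-- Each `M i` is an *induced* matching of `G`: any edge of `G` whose two endpoints
are covered by `M i` belongs to `M i`. -/
def RSProperty {n t : ℕ} (G : SimpleGraph (Fin n))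
    (M : Fin t → Finset (Sym2 (Fin n))) : Prop :=
  ∀ i, ∀ e ∈ G.edgeSet, (∀ v ∈ e, ∃ e' ∈ M i, v ∈ e') → e ∈ M i

/-- Ordered RS property: for `i < j`, no edge of `M j` has both of its endpoints
covered by `M i`. -/
def ORSProperty {n t : ℕ} (G : SimpleGraph (Fin n))
    (M : Fin t → Finset (Sym2 (Fin n))) : Prop :=
  ∀ i j : Fin t, i < j → ∀ e ∈ M j, ¬ (∀ v ∈ e, ∃ e' ∈ M i, v ∈ e')

/-- There is an `n`-vertex `(r,t)`-Ruzsa–Szemerédi graph. -/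
def IsRSGraph (n r t : ℕ) : Prop :=
  ∃ (G : SimpleGraph (Fin n)) (M : Fin t → Finset (Sym2 (Fin n))),
    MatchingDecomp r G M ∧ RSProperty G M

/-- There is an `n`-vertex `(r,t)`-ordered Ruzsa–Szemerédi graph. -/
def IsORSGraph (n r t : ℕ) : Prop :=
  ∃ (G : SimpleGraph (Fin n)) (M : Fin t → Finset (Sym2 (Fin n))),
    MatchingDecomp r G M ∧ ORSProperty G M

/-- `RS(n,r)`: the largest `t` such that an `n`-vertex `(r,t)`-RS graph exists
(`0` if none exists). -/
noncomputable def RSnum (n r : ℕ) : ℕ := sSup {t | IsRSGraph n r t}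

/-- `ORS(n,r)`: the largest `t` such that an `n`-vertex `(r,t)`-ORS graph exists
(`0` if none exists). -/
noncomputable def ORSnum (n r : ℕ) : ℕ := sSup {t | IsORSGraph n r t}



open Finset

noncomputable section AuxRS

variable {α β V : Type*}

/-- smaller endpoint of an unordered pair -/
def eMin [LinearOrder α] (e : Sym2 α) : α :=
  Sym2.lift ⟨fun x y => min x y, fun x y => min_comm x y⟩ e

/-- larger endpoint of an unordered pair -/
def eMax [LinearOrder α] (e : Sym2 α) : α :=
  Sym2.lift ⟨fun x y => max x y, fun x y => max_comm x y⟩ e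

@[simp] lemma eMin_mk [LinearOrder α] (x y : α) : eMin s(x, y) = min x y := rfl
@[simp] lemma eMax_mk [LinearOrder α] (x y : α) : eMax s(x, y) = max x y := rfl

lemma eMin_mem [LinearOrder α] (e : Sym2 α) : eMin e ∈ e := by
  induction e using Sym2.ind with
  | _ x y =>
    rw [eMin_mk, Sym2.mem_iff]
    rcases le_total x y with h | h
    · left; exact min_eq_left h
    · right; exact min_eq_right h

lemma eMax_mem [LinearOrder α] (e : Sym2 α) : eMax e ∈ e := by
  induction e using Sym2.ind with
  | _ x y =>
    rw [eMax_mk, Sym2.mem_iff]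
    rcases le_total x y with h | h
    · right; exact max_eq_right h
    · left; exact max_eq_left h

lemma eq_mk_eMin_eMax [LinearOrder α] (e : Sym2 α) : e = s(eMin e, eMax e) := by
  induction e using Sym2.ind with
  | _ x y =>
    rw [eMin_mk, eMax_mk]
    rcases le_total x y with h | h
    · rw [min_eq_left h, max_eq_right h]
    · rw [min_eq_right h, max_eq_left h, Sym2.eq_swap]

lemma eMin_ne_eMax [LinearOrder α] {e : Sym2 α} (h : ¬ e.IsDiag) : eMin e ≠ eMax e := by
  intro heq
  apply h
  rw [eq_mk_eMin_eMax e, Sym2.mk_isDiag_iff]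
  exact heq

end AuxRS


section Fam
variable {V : Type*}

/-- abstract RS family: `T` pairwise edge-disjoint non-degenerate matchings of size `r`,
each one "induced" with respect to the union. -/
def RSFam (T : ℕ) (M : Fin T → Finset (Sym2 V)) (r : ℕ) : Prop :=
  (∀ i, (M i).card = r) ∧
  (∀ i, ∀ e ∈ M i, ¬ e.IsDiag) ∧
  (∀ i, ∀ e ∈ M i, ∀ e' ∈ M i, e ≠ e' → ∀ v, v ∈ e → v ∉ e') ∧
  (∀ i j, i ≠ j → Disjoint (M i) (M j)) ∧
  (∀ i j : Fin T, i ≠ j → ∀ e ∈ M j, ¬ (∀ v ∈ e, ∃ e' ∈ M i, v ∈ e'))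

/-- trimming each matching to a smaller size. -/
lemma RSFam.trim {T R r : ℕ} {M : Fin T → Finset (Sym2 V)} (h : RSFam T M R)
    (hr : r ≤ R) : ∃ M' : Fin T → Finset (Sym2 V), (∀ i, M' i ⊆ M i) ∧ RSFam T M' r := by
  obtain ⟨hcard, hnd, hmatch, hdisj, hind⟩ := h
  have hch : ∀ i : Fin T, ∃ B ⊆ M i, B.card = r := by
    intro i
    exact Finset.exists_subset_card_eq (by rw [hcard i]; exact hr)
  choose M' hsub hcard' using hch
  refine ⟨M', hsub, hcard', fun i e he => hnd i e (hsub i he),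
    fun i e he e' he' hne v hv => hmatch i e (hsub i he) e' (hsub i he') hne v hv,
    fun i j hij => (hdisj i j hij).mono (hsub i) (hsub j),
    fun i j hij e he hcov => ?_⟩
  refine hind i j hij e (hsub j he) ?_
  intro v hv
  obtain ⟨e', he', hv'⟩ := hcov v hv
  exact ⟨e', hsub i he', hv'⟩

/-- realize an abstract RS family on a finite vertex type inside `Fin N`. -/
lemma RSFam.toIsRSGraph {T r N : ℕ} [Fintype V] [DecidableEq V]
    {M : Fin T → Finset (Sym2 V)} (h : RSFam T M r)
    (hN : Fintype.card V ≤ N) : IsRSGraph N r T := by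
  obtain ⟨hcard, hnd, hmatch, hdisj, hind⟩ := h
  -- embedding of V into Fin N
  obtain ⟨f⟩ : Nonempty (V ↪ Fin N) := by
    refine ⟨(Fintype.equivFin V).toEmbedding.trans (Fin.castLEEmb ?_)⟩
    simpa using hN
  have hfinj : Function.Injective f := f.injective
  have hsinj : Function.Injective (Sym2.map f) := Sym2.map.injective hfinj
  set M' : Fin T → Finset (Sym2 (Fin N)) := fun i => (M i).image (Sym2.map f) with hM'
  have hmem : ∀ (i : Fin T) (e : Sym2 V) (v : V), v ∈ e → f v ∈ Sym2.map f e := by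
    intro i e v hv
    rw [Sym2.mem_map]
    exact ⟨v, hv, rfl⟩
  have hnd' : ∀ i, ∀ e ∈ M' i, ¬ e.IsDiag := by
    intro i e he hd
    simp only [hM', Finset.mem_image] at he
    obtain ⟨a, ha, rfl⟩ := he
    induction a using Sym2.ind with
    | _ x y =>
      rw [Sym2.map_pair_eq, Sym2.mk_isDiag_iff] at hd
      exact hnd i _ ha (by rw [Sym2.mk_isDiag_iff]; exact hfinj hd)
  refine ⟨SimpleGraph.fromEdgeSet (⋃ i, ↑(M' i)), M', ⟨?_, ?_, ?_, ?_, ?_⟩, ?_⟩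
  · intro i; rw [hM', Finset.card_image_of_injective _ hsinj]; exact hcard i
  · intro i e he
    rw [SimpleGraph.edgeSet_fromEdgeSet]
    exact ⟨Set.mem_iUnion.2 ⟨i, he⟩, fun hd => hnd' i e he hd⟩
  · -- matching property
    intro i e he e' he' hne v hv hv'
    simp only [hM', Finset.mem_image] at he he'
    obtain ⟨a, ha, rfl⟩ := he
    obtain ⟨a', ha', rfl⟩ := he'
    rw [Sym2.mem_map] at hv hv'
    obtain ⟨u, hu, rfl⟩ := hv
    obtain ⟨u', hu', huu⟩ := hv'
    have : u' = u := hfinj huu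
    subst this
    exact hmatch i a ha a' ha' (fun hh => hne (by rw [hh])) u' hu hu'
  · intro i j hij
    rw [hM']
    exact (Finset.disjoint_image hsinj).2 (hdisj i j hij)
  · intro e he
    rw [SimpleGraph.edgeSet_fromEdgeSet] at he
    obtain ⟨hu, _⟩ := he
    rw [Set.mem_iUnion] at hu
    obtain ⟨i, hi⟩ := hu
    rw [Finset.mem_coe] at hi
    exact ⟨i, hi⟩
  · -- RS property
    intro i e he hcov
    rw [SimpleGraph.edgeSet_fromEdgeSet] at he
    obtain ⟨hu, _⟩ := he
    rw [Set.mem_iUnion] at hu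
    obtain ⟨j, hj⟩ := hu
    rw [Finset.mem_coe] at hj
    by_cases hij : i = j
    · subst hij; exact hj
    · exfalso
      simp only [hM', Finset.mem_image] at hj
      obtain ⟨a, ha, rfl⟩ := hj
      refine hind i j (Ne.symm fun hh => hij hh.symm) a ha ?_
      intro v hv
      obtain ⟨e', he', hv'⟩ := hcov (f v) (hmem j a v hv)
      simp only [hM', Finset.mem_image] at he'
      obtain ⟨b, hb, rfl⟩ := he'
      rw [Sym2.mem_map] at hv'
      obtain ⟨u, hu, huv⟩ := hv'
      have : u = v := hfinj huv
      subst this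
      exact ⟨b, hb, hu⟩

section Prod

variable {n t r L : ℕ}

/-- the product matching construction -/
lemma product_RSFam (hL : 0 < L)
    {M : Fin t → Finset (Sym2 (Fin n))}
    (hcard : ∀ i, (M i).card = r)
    (hnd : ∀ i, ∀ e ∈ M i, ¬ e.IsDiag)
    (hmatch : ∀ i, ∀ e ∈ M i, ∀ e' ∈ M i, e ≠ e' → ∀ v, v ∈ e → v ∉ e')
    (hdisj : ∀ i j, i ≠ j → Disjoint (M i) (M j))
    (hORS : ∀ i j : Fin t, i < j → ∀ e ∈ M j, ¬ (∀ v ∈ e, ∃ e' ∈ M i, v ∈ e'))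
    (S : Finset (Fin L → Fin t))
    (hS : ∀ a ∈ S, ∀ b ∈ S, a ≠ b → ∃ k, a k < b k) :
    ∃ M' : Fin S.card → Finset (Sym2 (Fin L → Fin n)), RSFam S.card M' (r ^ L) := by
  classical
  set Φ : (Fin L → Sym2 (Fin n)) → Sym2 (Fin L → Fin n) :=
    fun E => s(fun k => eMin (E k), fun k => eMax (E k)) with hΦ
  have hΦinj : Function.Injective Φ := by
    intro E E' hEE
    rw [hΦ] at hEE
    simp only [Sym2.eq_iff] at hEE
    funext k
    rcases hEE with ⟨h1, h2⟩ | ⟨h1, h2⟩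
    · have h1' := congrFun h1 k
      have h2' := congrFun h2 k
      rw [eq_mk_eMin_eMax (E k), eq_mk_eMin_eMax (E' k), h1', h2']
    · have h1' := congrFun h1 k
      have h2' := congrFun h2 k
      rw [eq_mk_eMin_eMax (E k), eq_mk_eMin_eMax (E' k), h1', h2', Sym2.eq_swap]
  set P : (Fin L → Fin t) → Finset (Fin L → Sym2 (Fin n)) :=
    fun a => Fintype.piFinset (fun k => M (a k)) with hP
  set pm : (Fin L → Fin t) → Finset (Sym2 (Fin L → Fin n)) :=
    fun a => (P a).image Φ with hpm
  -- membership of vertices of Φ E in coordinates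
  have hvert : ∀ (E : Fin L → Sym2 (Fin n)) (v : Fin L → Fin n),
      v ∈ Φ E → ∀ k, v k ∈ E k := by
    intro E v hv k
    rw [hΦ, Sym2.mem_iff] at hv
    rcases hv with rfl | rfl
    · exact eMin_mem (E k)
    · exact eMax_mem (E k)
  -- index function
  set g : Fin S.card → (Fin L → Fin t) := fun i => (S.equivFin.symm i : Fin L → Fin t)
    with hg
  have hgS : ∀ i, g i ∈ S := fun i => (S.equivFin.symm i).2
  have hginj : Function.Injective g := by
    intro i j hij
    have : S.equivFin.symm i = S.equivFin.symm j := Subtype.ext hij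
    exact S.equivFin.symm.injective this
  refine ⟨fun i => pm (g i), ?_, ?_, ?_, ?_, ?_⟩
  · -- cards
    intro i
    rw [hpm, Finset.card_image_of_injective _ hΦinj, hP, Fintype.card_piFinset]
    simp [hcard]
  · -- nondiag
    intro i e he hd
    rw [hpm, Finset.mem_image] at he
    obtain ⟨E, hE, rfl⟩ := he
    rw [hΦ, Sym2.mk_isDiag_iff] at hd
    have hk := congrFun hd ⟨0, hL⟩
    rw [hP, Fintype.mem_piFinset] at hE
    exact eMin_ne_eMax (hnd _ _ (hE ⟨0, hL⟩)) hk
  · -- matching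
    intro i e he e' he' hne v hv hv'
    rw [hpm, Finset.mem_image] at he he'
    obtain ⟨E, hE, rfl⟩ := he
    obtain ⟨E', hE', rfl⟩ := he'
    rw [hP, Fintype.mem_piFinset] at hE hE'
    have hEk : ∀ k, v k ∈ E k := hvert E v hv
    have hE'k : ∀ k, v k ∈ E' k := hvert E' v hv'
    have : E = E' := by
      funext k
      by_contra hkne
      exact hmatch _ _ (hE k) _ (hE' k) hkne (v k) (hEk k) (hE'k k)
    exact hne (by rw [this])
  · -- pairwise disjoint
    intro i j hij
    rw [Finset.disjoint_left]
    intro e he he'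
    rw [hpm, Finset.mem_image] at he he'
    obtain ⟨E, hE, rfl⟩ := he
    obtain ⟨E', hE', hEE⟩ := he'
    have : E' = E := hΦinj hEE
    subst this
    rw [hP, Fintype.mem_piFinset] at hE hE'
    obtain ⟨k, hk⟩ := hS _ (hgS i) _ (hgS j) (fun hh => hij (hginj hh))
    exact (Finset.disjoint_left.1 (hdisj _ _ (ne_of_lt hk))) (hE k) (hE' k)
  · -- induced pair condition
    intro i j hij e he hcov
    rw [hpm, Finset.mem_image] at he
    obtain ⟨E, hE, rfl⟩ := he
    rw [hP, Fintype.mem_piFinset] at hE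
    obtain ⟨k, hk⟩ := hS _ (hgS i) _ (hgS j) (fun hh => hij (hginj hh))
    -- the two endpoints of Φ E
    have hX : (fun k => eMin (E k)) ∈ Φ E := by rw [hΦ]; exact Sym2.mem_mk_left _ _
    have hY : (fun k => eMax (E k)) ∈ Φ E := by rw [hΦ]; exact Sym2.mem_mk_right _ _
    obtain ⟨f1, hf1, hXf⟩ := hcov _ hX
    obtain ⟨f2, hf2, hYf⟩ := hcov _ hY
    rw [hpm, Finset.mem_image] at hf1 hf2
    obtain ⟨F1, hF1, rfl⟩ := hf1
    obtain ⟨F2, hF2, rfl⟩ := hf2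
    rw [hP, Fintype.mem_piFinset] at hF1 hF2
    refine hORS (g i k) (g j k) hk (E k) (hE k) ?_
    intro v hv
    rw [eq_mk_eMin_eMax (E k), Sym2.mem_iff] at hv
    rcases hv with rfl | rfl
    · exact ⟨F1 k, hF1 k, hvert F1 _ hXf k⟩
    · exact ⟨F2 k, hF2 k, hvert F2 _ hYf k⟩

end Prod

section Pigeon

lemma exists_antichain (L t : ℕ) (hL : 0 < L) (ht : 0 < t) :
    ∃ S : Finset (Fin L → Fin t), (∀ a ∈ S, ∀ b ∈ S, a ≠ b → ∃ k, a k < b k) ∧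
      t ^ L / (L * t) ≤ S.card := by
  classical
  have hLt : 0 < L * t := Nat.mul_pos hL ht
  have hmaps : ∀ a : Fin L → Fin t, a ∈ (Finset.univ : Finset (Fin L → Fin t)) →
      (∑ k, (a k : ℕ)) ∈ Finset.range (L * t) := by
    intro a _
    rw [Finset.mem_range]
    calc ∑ k, (a k : ℕ) < ∑ _k : Fin L, t :=
          Finset.sum_lt_sum_of_nonempty (Finset.univ_nonempty_iff.2 ⟨⟨0, hL⟩⟩)
            (fun k _ => (a k).2)
      _ = L * t := by simp [Finset.sum_const, Finset.card_univ, Nat.smul_one_eq_cast]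
  have hcardle : (Finset.range (L * t)).card * (t ^ L / (L * t)) ≤
      (Finset.univ : Finset (Fin L → Fin t)).card := by
    rw [Finset.card_range, Finset.card_univ, Fintype.card_fun]
    simp only [Fintype.card_fin]
    rw [mul_comm]
    exact Nat.div_mul_le_self _ _
  obtain ⟨y, _, hy⟩ := Finset.exists_le_card_fiber_of_mul_le_card_of_maps_to hmaps
    (Finset.nonempty_range_iff.2 (Nat.pos_iff_ne_zero.1 hLt)) hcardle
  refine ⟨Finset.univ.filter (fun a => (∑ k, (a k : ℕ)) = y), ?_, hy⟩
  intro a ha b hb hab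
  rw [Finset.mem_filter] at ha hb
  by_contra hcon
  push_neg at hcon
  have hle : ∀ k, (b k : ℕ) ≤ (a k : ℕ) := fun k => Fin.le_def.1 (hcon k)
  have hne : ∃ k, (b k : ℕ) < (a k : ℕ) := by
    by_contra hc
    push_neg at hc
    apply hab
    funext k
    exact Fin.ext (le_antisymm (hc k) (hle k))
  obtain ⟨k0, hk0⟩ := hne
  have : (∑ k, (b k : ℕ)) < ∑ k, (a k : ℕ) :=
    Finset.sum_lt_sum (fun k _ => hle k) ⟨k0, Finset.mem_univ _, hk0⟩
  rw [ha.2, hb.2] at this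
  exact lt_irrefl _ this

end Pigeon

section Sup

lemma ors_bound {n r t : ℕ} (hr : 0 < r) (h : IsORSGraph n r t) :
    t ≤ Fintype.card (Finset (Sym2 (Fin n))) := by
  obtain ⟨G, M, ⟨hcard, _, _, hdisj, _⟩, _⟩ := h
  have : Fintype.card (Fin t) ≤ Fintype.card (Finset (Sym2 (Fin n))) := by
    refine Fintype.card_le_of_injective M ?_
    intro i j hij
    by_contra hne
    have hnonempty : (M j).Nonempty := Finset.card_pos.1 (by rw [hcard j]; exact hr)
    have := hdisj i j hne
    rw [hij] at this
    exact hnonempty.ne_empty (disjoint_self.1 this)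
  simpa using this

lemma rs_bound {n r t : ℕ} (hr : 0 < r) (h : IsRSGraph n r t) :
    t ≤ Fintype.card (Finset (Sym2 (Fin n))) := by
  obtain ⟨G, M, ⟨hcard, _, _, hdisj, _⟩, _⟩ := h
  have : Fintype.card (Fin t) ≤ Fintype.card (Finset (Sym2 (Fin n))) := by
    refine Fintype.card_le_of_injective M ?_
    intro i j hij
    by_contra hne
    have hnonempty : (M j).Nonempty := Finset.card_pos.1 (by rw [hcard j]; exact hr)
    have := hdisj i j hne
    rw [hij] at this
    exact hnonempty.ne_empty (disjoint_self.1 this)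
  simpa using this

lemma ors_attained {n r : ℕ} (hr : 0 < r) (h1 : 0 < ORSnum n r) :
    IsORSGraph n r (ORSnum n r) := by
  have hbdd : BddAbove {t | IsORSGraph n r t} :=
    ⟨Fintype.card (Finset (Sym2 (Fin n))), fun t ht => ors_bound hr ht⟩
  have hne : {t | IsORSGraph n r t}.Nonempty := by
    by_contra hc
    rw [Set.not_nonempty_iff_eq_empty] at hc
    rw [ORSnum, hc] at h1
    simp at h1
  exact Nat.sSup_mem hne hbdd

lemma le_rsnum {n r t : ℕ} (hr : 0 < r) (h : IsRSGraph n r t) : t ≤ RSnum n r :=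
  le_csSup ⟨Fintype.card (Finset (Sym2 (Fin n))), fun t' ht' => rs_bound hr ht'⟩ h

end Sup

section Key

/-- combinatorial key lemma: from an ORS graph to an RS graph on `N ≥ n^L` vertices. -/
lemma key_construction {n r t L N r' : ℕ} (hL : 0 < L) (ht : 0 < t)
    (hors : IsORSGraph n r t) (hr' : r' ≤ r ^ L) (hN : n ^ L ≤ N) :
    ∃ T, t ^ L / (L * t) ≤ T ∧ IsRSGraph N r' T := by
  classical
  obtain ⟨G, M, ⟨hcard, hsub, hmatch, hdisj, _⟩, hORS⟩ := hors
  have hnd : ∀ i, ∀ e ∈ M i, ¬ e.IsDiag := fun i e he =>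
    G.not_isDiag_of_mem_edgeSet (hsub i he)
  obtain ⟨S, hanti, hScard⟩ := exists_antichain L t hL ht
  obtain ⟨M', hfam⟩ := product_RSFam hL hcard hnd hmatch hdisj hORS S hanti
  obtain ⟨M'', _, hfam'⟩ := hfam.trim hr'
  refine ⟨S.card, hScard, hfam'.toIsRSGraph ?_⟩
  rw [Fintype.card_fun]
  simpa using hN

end Key

section Analytic

/-- real lower bound for the natural division appearing in the construction -/
lemma natdiv_lower {L t : ℕ} (hL : 0 < L) (ht : 0 < t) (h2L : (2*L : ℝ) ≤ t) :
    ((t:ℝ))^(L-1) / (2*L) ≤ ((t ^ L / (L * t) : ℕ) : ℝ) := by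
  have hLpos : (0:ℝ) < L := by exact_mod_cast hL
  have htpos : (0:ℝ) < t := by exact_mod_cast ht
  rcases Nat.lt_or_ge L 2 with hL1 | hL2
  · -- L = 1
    have : L = 1 := by omega
    subst this
    rw [one_mul, pow_one, Nat.div_self ht]
    simp only [Nat.cast_one]
    rw [pow_zero]
    nlinarith
  · -- L ≥ 2
    have hQ : ((t:ℝ))^L < (L*t) * (((t ^ L / (L * t) : ℕ) : ℝ) + 1) := by
      have hmod := Nat.div_add_mod (t^L) (L*t)
      have hmodlt : (t^L) % (L*t) < L*t := Nat.mod_lt _ (Nat.mul_pos hL ht)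
      have : t^L < (L*t) * (t^L/(L*t)) + L*t := by omega
      calc ((t:ℝ))^L = ((t^L : ℕ) : ℝ) := by push_cast; ring
        _ < (((L*t) * (t^L/(L*t)) + L*t : ℕ) : ℝ) := by exact_mod_cast this
        _ = (L*t) * (((t ^ L / (L * t) : ℕ) : ℝ) + 1) := by push_cast; ring
    have ht1 : (1:ℝ) ≤ t := by exact_mod_cast ht
    have hpow : (t:ℝ) ≤ (t:ℝ)^(L-1) := by
      calc (t:ℝ) = (t:ℝ)^1 := (pow_one _).symm
        _ ≤ (t:ℝ)^(L-1) := pow_le_pow_right₀ ht1 (by omega)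
    have h2L' : (2*L : ℝ) ≤ (t:ℝ)^(L-1) := le_trans h2L hpow
    have hLL : ((t:ℝ))^L = (t:ℝ)^(L-1) * t := by
      rw [← pow_succ]
      congr 1
      omega
    have hQ' : (t:ℝ)^(L-1) * t < (L*t) * (((t ^ L / (L * t) : ℕ) : ℝ) + 1) := by
      rw [← hLL]; exact hQ
    -- divide by L*t
    have hLt : (0:ℝ) < L*t := by positivity
    have key : (t:ℝ)^(L-1) / L - 1 < ((t ^ L / (L * t) : ℕ) : ℝ) := by
      rw [div_sub_one (ne_of_gt hLpos), div_lt_iff₀ hLpos]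
      nlinarith
    have hu1 : (1:ℝ) ≤ (t:ℝ)^(L-1) / (2*L) := by
      rw [le_div_iff₀ (by positivity)]
      linarith
    have hsplit : (t:ℝ)^(L-1) / L = 2 * ((t:ℝ)^(L-1) / (2*L)) := by
      field_simp
    linarith

end Analytic

set_option maxHeartbeats 1000000 in
/-- **Theorem 1 (main) of the paper.** If `ORS(n, ⌈εn⌉) ≥ C·n^c` for all large `n`,
then for every fixed `δ > 0` there are `ε' > 0` and `C' > 0` with
`RS(n, ⌈ε'n⌉) ≥ C'·n^{c(1-δ)}` for all large `n`. -/
theorem ors_polynomial_implies_rs_polynomial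
    (c ε C : ℝ) (hc : 0 < c) (hε0 : 0 < ε) (hε1 : ε < 1) (hC : 0 < C)
    (h : ∀ᶠ n : ℕ in Filter.atTop,
      C * (n : ℝ) ^ c ≤ (ORSnum n ⌈ε * (n : ℝ)⌉₊ : ℝ))
    (δ : ℝ) (hδ : 0 < δ) :
    ∃ ε' : ℝ, 0 < ε' ∧ ∃ C' : ℝ, 0 < C' ∧
      ∀ᶠ n : ℕ in Filter.atTop,
        C' * (n : ℝ) ^ (c * (1 - δ)) ≤ (RSnum n ⌈ε' * (n : ℝ)⌉₊ : ℝ) := by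
  classical
  set L : ℕ := ⌈1/δ⌉₊ with hLdef
  have hL : 0 < L := Nat.ceil_pos.2 (by positivity)
  have hLr1 : (1:ℝ) ≤ (L:ℝ) := by exact_mod_cast hL
  have hLrpos : (0:ℝ) < (L:ℝ) := by linarith
  have hLinvδ : 1/δ ≤ (L:ℝ) := Nat.le_ceil _
  set e : ℝ := c * ((L:ℝ) - 1) with hedef
  have he0 : 0 ≤ e := by
    rw [hedef]; apply mul_nonneg hc.le; linarith
  set ε' : ℝ := (ε/2)^L with hε'def
  have hε' : 0 < ε' := by rw [hε'def]; positivity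
  set Cp : ℝ := C^(L-1) / ((2*L) * (2:ℝ)^e) with hCpdef
  have h2e : (0:ℝ) < (2:ℝ)^e := Real.rpow_pos_of_pos (by norm_num) e
  have hCp : 0 < Cp := by
    rw [hCpdef]
    apply div_pos (pow_pos hC _)
    positivity
  refine ⟨ε', hε', Cp, hCp, ?_⟩
  -- threshold n₀ for the hypothesis and for C n^c ≥ 2L
  have htend : Filter.Tendsto (fun m : ℕ => C * (m:ℝ)^c) Filter.atTop Filter.atTop := by
    have h1 : Filter.Tendsto (fun x : ℝ => C * x^c) Filter.atTop Filter.atTop :=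
      (tendsto_rpow_atTop hc).const_mul_atTop hC
    exact h1.comp tendsto_natCast_atTop_atTop
  have h2 : ∀ᶠ m : ℕ in Filter.atTop, (2*(L:ℝ)) ≤ C * (m:ℝ)^c :=
    htend.eventually_ge_atTop _
  obtain ⟨n₀, hn₀⟩ := Filter.eventually_atTop.1 (h.and h2)
  set n₁ : ℕ := max n₀ 1 with hn₁def
  have hn₁1 : 1 ≤ n₁ := le_max_right _ _
  rw [Filter.eventually_atTop]
  refine ⟨max (n₁^L) (max ((4*L)^L) ⌈4/ε^L⌉₊), fun N hN => ?_⟩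
  have hNn₁ : n₁^L ≤ N := le_trans (le_max_left _ _) hN
  have hN4L : (4*L)^L ≤ N := le_trans (le_trans (le_max_left _ _) (le_max_right _ _)) hN
  have hNε : (⌈4/ε^L⌉₊ : ℕ) ≤ N := le_trans (le_trans (le_max_right _ _) (le_max_right _ _)) hN
  have hN1 : 1 ≤ N := le_trans (Nat.one_le_iff_ne_zero.2 (pow_ne_zero _ (by omega))) hNn₁
  have hN1' : (1:ℝ) ≤ (N:ℝ) := by exact_mod_cast hN1
  have hN0' : (0:ℝ) ≤ (N:ℝ) := by linarith
  -- the L-th root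
  set x : ℝ := (N:ℝ) ^ (1/(L:ℝ)) with hxdef
  have hx0 : 0 ≤ x := Real.rpow_nonneg hN0' _
  have hxpow : x ^ (L:ℕ) = (N:ℝ) := by
    rw [hxdef, ← Real.rpow_natCast ((N:ℝ) ^ (1/(L:ℝ))) L, ← Real.rpow_mul hN0']
    rw [one_div, inv_mul_cancel₀ (ne_of_gt hLrpos), Real.rpow_one]
  have hroot : ∀ m : ℕ, m^L ≤ N → (m:ℝ) ≤ x := by
    intro m hm
    by_contra hcon
    push_neg at hcon
    have : x^(L:ℕ) < (m:ℝ)^(L:ℕ) := pow_lt_pow_left₀ hcon hx0 (by omega)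
    rw [hxpow] at this
    have : (N:ℝ) < ((m^L : ℕ) : ℝ) := by push_cast; linarith
    have := hm
    have hcast : ((m^L : ℕ) : ℝ) ≤ (N:ℝ) := by exact_mod_cast hm
    linarith
  set n : ℕ := ⌊x⌋₊ with hndef
  have hn₁n : n₁ ≤ n := Nat.le_floor (hroot n₁ hNn₁)
  have hn1 : 1 ≤ n := le_trans hn₁1 hn₁n
  have hn0' : (0:ℝ) < n := by exact_mod_cast hn1
  have hn₀n : n₀ ≤ n := le_trans (le_max_left _ _) hn₁n
  have h4Lx : (4*(L:ℝ)) ≤ x := by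
    have := hroot (4*L) hN4L
    push_cast at this
    exact this
  have hx1 : (1:ℝ) ≤ x := by nlinarith
  have hnx : (n:ℝ) ≤ x := Nat.floor_le hx0
  have hxn1 : x < (n:ℝ) + 1 := Nat.lt_floor_add_one x
  have hnL_le_N : n^L ≤ N := by
    have h1 : (n:ℝ)^(L:ℕ) ≤ x^(L:ℕ) := pow_le_pow_left₀ (by positivity) hnx _
    rw [hxpow] at h1
    exact_mod_cast h1
  -- lower bound (3/4) N ≤ n^L
  have hlow : (3/4:ℝ) * N ≤ (n:ℝ)^L := by
    have hxne : x ≠ 0 := by linarith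
    have hb : 1 + (L:ℕ) * (-(1/x)) ≤ (1 + -(1/x))^(L:ℕ) := by
      apply one_add_mul_le_pow
      have : 1/x ≤ 1 := by
        rw [div_le_one (by linarith)]; exact hx1
      linarith
    have hfac : (1 + -(1/x)) * x = x - 1 := by field_simp; ring
    have hxLpos : (0:ℝ) ≤ x^(L:ℕ) := by positivity
    have hmul : (1 + -(1/x))^(L:ℕ) * x^(L:ℕ) = (x-1)^(L:ℕ) := by
      rw [← mul_pow, hfac]
    have hLx : (L:ℝ)/x ≤ 1/4 := by
      rw [div_le_div_iff₀ (by linarith) (by norm_num)]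
      linarith
    have h1x0 : (0:ℝ) ≤ 1 + -(1/x) := by
      have : 1/x ≤ 1 := by rw [div_le_one (by linarith)]; exact hx1
      linarith
    have hx1n : x - 1 ≤ (n:ℝ) := by linarith
    have hstep : (x-1)^(L:ℕ) ≤ (n:ℝ)^(L:ℕ) := by
      apply pow_le_pow_left₀ (by nlinarith) hx1n
    have hber : (3/4:ℝ) * x^(L:ℕ) ≤ (1 + -(1/x))^(L:ℕ) * x^(L:ℕ) := by
      apply mul_le_mul_of_nonneg_right _ hxLpos
      have hLox : (L:ℝ) * (1/x) = (L:ℝ)/x := by ring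
      have h34 : (3/4:ℝ) ≤ 1 + (L:ℕ) * (-(1/x)) := by
        push_cast
        nlinarith
      exact le_trans h34 hb

    calc (3/4:ℝ) * N = (3/4) * x^(L:ℕ) := by rw [hxpow]
      _ ≤ (1 + -(1/x))^(L:ℕ) * x^(L:ℕ) := hber
      _ = (x-1)^(L:ℕ) := hmul
      _ ≤ (n:ℝ)^L := hstep
  -- apply the hypothesis at n
  obtain ⟨hA, hB⟩ := hn₀ n hn₀n
  set r : ℕ := ⌈ε * (n:ℝ)⌉₊ with hrdef
  set t : ℕ := ORSnum n r with htdef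
  have htR : C * (n:ℝ)^c ≤ (t:ℝ) := hA
  have h2Lt : (2*(L:ℝ)) ≤ (t:ℝ) := le_trans hB htR
  have ht0 : 0 < t := by
    rcases Nat.eq_zero_or_pos t with h0 | h0
    · exfalso; rw [h0] at h2Lt; push_cast at h2Lt; nlinarith
    · exact h0
  have hr0 : 0 < r := Nat.ceil_pos.2 (by positivity)
  have hors : IsORSGraph n r t := ors_attained hr0 ht0
  set r' : ℕ := ⌈ε' * (N:ℝ)⌉₊ with hr'def
  have hr'0 : 0 < r' := Nat.ceil_pos.2 (by positivity)
  -- r' ≤ r ^ L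
  have hεLN : (4:ℝ) ≤ ε^L * N := by
    have h1 : (4:ℝ)/ε^L ≤ (⌈4/ε^L⌉₊ : ℝ) := Nat.le_ceil _
    have h2 : ((⌈4/ε^L⌉₊ : ℕ) : ℝ) ≤ (N:ℝ) := by exact_mod_cast hNε
    have h3 : (4:ℝ)/ε^L ≤ N := le_trans h1 h2
    rw [div_le_iff₀ (by positivity)] at h3
    nlinarith [pow_pos hε0 L]
  have h2L2 : (2:ℝ) ≤ (2:ℝ)^(L:ℕ) := by
    calc (2:ℝ) = 2^1 := (pow_one _).symm
      _ ≤ 2^(L:ℕ) := pow_le_pow_right₀ (by norm_num) hL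
  have hr'le : r' ≤ r ^ L := by
    have hc1 : (r':ℝ) < ε' * N + 1 := by
      rw [hr'def]
      exact Nat.ceil_lt_add_one (by positivity)
    have hεdiv : ε' * N = ε^L * N / 2^(L:ℕ) := by
      rw [hε'def, div_pow]; ring
    have h2Lpos : (0:ℝ) < 2^(L:ℕ) := by positivity
    have hc2 : ε' * N + 1 ≤ (3/4) * (ε^L * N) := by
      rw [hεdiv]
      have hh1 : ε^L * N / 2^(L:ℕ) ≤ ε^L * N / 2 := by
        apply div_le_div_of_nonneg_left _ (by norm_num) h2L2
        nlinarith
      nlinarith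
    have hc3 : (3/4:ℝ) * (ε^L * N) ≤ (ε * n)^L := by
      rw [mul_pow]
      nlinarith [pow_pos hε0 L, hlow]
    have hc4 : ((ε:ℝ) * n)^L ≤ (r:ℝ)^L := by
      apply pow_le_pow_left₀ (by positivity)
      rw [hrdef]
      exact Nat.le_ceil _
    have : (r':ℝ) ≤ ((r:ℝ))^L := by linarith
    exact_mod_cast this
  obtain ⟨T, hTge, hTrs⟩ := key_construction hL ht0 hors hr'le hnL_le_N
  have hTle := le_rsnum hr'0 hTrs
  -- numeric chain
  have hQ : ((t:ℝ))^(L-1) / (2*L) ≤ ((t ^ L / (L * t) : ℕ) : ℝ) := natdiv_lower hL ht0 h2Lt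
  have hchain1 : (N:ℝ)^(c*(1-δ)) ≤ (2:ℝ)^e * (n:ℝ)^e := by
    have hs1 : (N:ℝ)^(c*(1-δ)) ≤ (N:ℝ)^(e/(L:ℝ)) := by
      apply Real.rpow_le_rpow_of_exponent_le hN1'
      rw [hedef]
      have hδL : 1 ≤ δ * L := by
        calc (1:ℝ) = δ * (1/δ) := by field_simp
          _ ≤ δ * L := by apply mul_le_mul_of_nonneg_left hLinvδ hδ.le
      have hgoal : (1 - δ) ≤ ((L:ℝ) - 1)/(L:ℝ) := by
        rw [le_div_iff₀ hLrpos]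
        have hexp : (1-δ)*(L:ℝ) = (L:ℝ) - δ*(L:ℝ) := by ring
        linarith
      calc c * (1-δ) ≤ c * (((L:ℝ)-1)/(L:ℝ)) := by
            apply mul_le_mul_of_nonneg_left hgoal hc.le
        _ = c * ((L:ℝ)-1) / (L:ℝ) := by ring
    have hs2 : (N:ℝ)^(e/(L:ℝ)) = x^e := by
      rw [hxdef, ← Real.rpow_mul hN0']
      congr 1
      field_simp
    have hs3 : x^e ≤ ((2:ℝ)*(n:ℝ))^e := by
      apply Real.rpow_le_rpow hx0 _ he0
      linarith
    have hs4 : ((2:ℝ)*(n:ℝ))^e = (2:ℝ)^e * (n:ℝ)^e := Real.mul_rpow (by norm_num) (by positivity)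
    calc (N:ℝ)^(c*(1-δ)) ≤ (N:ℝ)^(e/(L:ℝ)) := hs1
      _ = x^e := hs2
      _ ≤ ((2:ℝ)*(n:ℝ))^e := hs3
      _ = (2:ℝ)^e * (n:ℝ)^e := hs4
  have hne : (n:ℝ)^e = ((n:ℝ)^c)^(L-1 : ℕ) := by
    rw [← Real.rpow_natCast ((n:ℝ)^c) (L-1), ← Real.rpow_mul (by positivity)]
    rw [hedef]
    congr 1
    have : ((L-1 : ℕ) : ℝ) = (L:ℝ) - 1 := by
      rw [Nat.cast_sub hL]; norm_num
    rw [this]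
  have hCn : C^(L-1) * ((n:ℝ)^c)^(L-1) ≤ (t:ℝ)^(L-1) := by
    rw [← mul_pow]
    apply pow_le_pow_left₀ (by positivity) htR
  have hfinal : Cp * (N:ℝ)^(c*(1-δ)) ≤ ((t:ℝ))^(L-1) / (2*L) := by
    have hstep : Cp * (N:ℝ)^(c*(1-δ)) ≤ Cp * ((2:ℝ)^e * (n:ℝ)^e) :=
      mul_le_mul_of_nonneg_left hchain1 hCp.le
    have heq : Cp * ((2:ℝ)^e * (n:ℝ)^e) = C^(L-1) * ((n:ℝ)^c)^(L-1) / (2*L) := by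
      rw [hCpdef, hne]
      field_simp
    calc Cp * (N:ℝ)^(c*(1-δ)) ≤ Cp * ((2:ℝ)^e * (n:ℝ)^e) := hstep
      _ = C^(L-1) * ((n:ℝ)^c)^(L-1) / (2*L) := heq
      _ ≤ (t:ℝ)^(L-1) / (2*L) := by
          gcongr
  calc Cp * (N:ℝ)^(c*(1-δ)) ≤ ((t:ℝ))^(L-1) / (2*L) := hfinal
    _ ≤ ((t ^ L / (L * t) : ℕ) : ℝ) := hQ
    _ ≤ (T:ℝ) := by exact_mod_cast hTge
    _ ≤ (RSnum N r' : ℝ) := by exact_mod_cast hTle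
end Fam
end

section
/- Let G be a graph whose edge set is partitioned into matchings M_1, …, M_t satisfying the ordered (ORS) property: for every i, the subgraph of G induced by the vertices covered by M_i contains no edge of M_j for any j > i. Let k ≥ 1 and s be integers, and let a ∈ [t]^k with Σ_{i=1}^k a_i = s. Then M_a is an induced matching in H_s: every edge of H_s both of whose endpoints are covered by M_a belongs to M_a. Equivalently, if (U, V) is an edge of H_s whose endpoints are matched by M_a, then f(U_i, V_i) = a_i for all i ∈ [k]. -/
open Finset

/-! If `U` and `W` are both matched by `M_a`, then in every coordinate both endpoints of
`(U i, W i)` are covered by `M_{a i}`, so by the ORS property `f (U i, W i) ≤ a i`.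
Both label tuples sum to `s`, hence all these inequalities are equalities. -/

/-- Given a simple graph `G` whose edges are labelled by `f : Sym2 V → Fin t`
(the label `i : Fin t` standing for the matching index `i + 1 ∈ [t]`), the graph
`H_s` on `V(G)^k`: `U` and `W` are adjacent iff `(U i, W i)` is an edge of `G` for
every `i` and the labels of these edges (as elements of `[t] = {1, …, t}`) sum to `s`. -/
def Hgraph {V : Type*} (G : SimpleGraph V) {t : ℕ} (f : Sym2 V → Fin t)
    (k : ℕ) [NeZero k] (s : ℕ) : SimpleGraph (Fin k → V) where
  Adj U W := (∀ i, G.Adj (U i) (W i)) ∧ (∑ i, (((f s(U i, W i) : ℕ)) + 1)) = s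
  symm := by
    constructor
    rintro U W ⟨h1, h2⟩
    refine ⟨fun i => (h1 i).symm, ?_⟩
    have e : ∀ i : Fin k, f s(W i, U i) = f s(U i, W i) := by
      intro i; rw [Sym2.eq_swap]
    calc ∑ i, (((f s(W i, U i) : ℕ)) + 1)
        = ∑ i, (((f s(U i, W i) : ℕ)) + 1) := by simp [e]
      _ = s := h2
  loopless := by
    constructor
    rintro U ⟨h1, -⟩
    exact G.loopless.irrefl (U 0) (h1 0)

/-- The pair `(U, W)` is an edge of `H_s` lying in `M_a`, i.e. the `i`-th coordinate
edge `(U i, W i)` lies in the matching with index `a i` for every `i`. -/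
def MemMa {V : Type*} (G : SimpleGraph V) {t : ℕ} (f : Sym2 V → Fin t)
    (k : ℕ) [NeZero k] (s : ℕ) (a : Fin k → Fin t) (U W : Fin k → V) : Prop :=
  (Hgraph G f k s).Adj U W ∧ ∀ i, f s(U i, W i) = a i

theorem Fin.eq_of_le_of_sum_succ_eq {ι : Type*} [Fintype ι] {t : ℕ} {b a : ι → Fin t}
    (hle : ∀ i, b i ≤ a i) (hsum : ∑ i, ((b i : ℕ) + 1) = ∑ i, ((a i : ℕ) + 1)) :
    b = a := by
  have hcoord := (Finset.sum_eq_sum_iff_of_le fun i _ => Nat.succ_le_succ (hle i)).mp hsum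
  funext i
  exact Fin.ext (Nat.succ_injective (hcoord i (mem_univ i)))

theorem label_le_of_endpoints_covered {V : Type*} {G : SimpleGraph V} {t : ℕ}
    {M : Fin t → Finset (Sym2 V)}
    (hORS : ∀ i j : Fin t, i < j → ∀ e ∈ M j, ¬ (∀ v ∈ e, ∃ e' ∈ M i, v ∈ e'))
    {f : Sym2 V → Fin t} (hf : ∀ e ∈ G.edgeSet, e ∈ M (f e))
    {u w x y : V} {i : Fin t} (huw : G.Adj u w) (hux : G.Adj u x) (hwy : G.Adj w y)
    (hx : f s(u, x) = i) (hy : f s(w, y) = i) :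
    f s(u, w) ≤ i := by
  refine le_of_not_gt fun hlt => hORS i _ hlt _ (hf _ huw) fun v hv => ?_
  rcases Sym2.mem_iff.mp hv with rfl | rfl
  · exact ⟨s(v, x), hx ▸ hf _ hux, Sym2.mem_mk_left _ _⟩
  · exact ⟨s(v, y), hy ▸ hf _ hwy, Sym2.mem_mk_left _ _⟩

theorem Ma_is_induced_matching_general {V : Type*}
    (G : SimpleGraph V) (t : ℕ) (M : Fin t → Finset (Sym2 V))
    (hORS : ∀ i j : Fin t, i < j → ∀ e ∈ M j, ¬ (∀ v ∈ e, ∃ e' ∈ M i, v ∈ e'))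
    (f : Sym2 V → Fin t) (hf : ∀ e ∈ G.edgeSet, e ∈ M (f e))
    (k : ℕ) [NeZero k] (s : ℕ)
    (a : Fin k → Fin t) (ha : (∑ i, ((a i : ℕ) + 1)) = s)
    (U W : Fin k → V) (hUW : (Hgraph G f k s).Adj U W)
    (hU : ∃ X, MemMa G f k s a U X) (hW : ∃ X, MemMa G f k s a W X) :
    ∀ i, f s(U i, W i) = a i := by
  obtain ⟨X, ⟨hUX, -⟩, hXa⟩ := hU
  obtain ⟨Y, ⟨hWY, -⟩, hYa⟩ := hW
  have hle : ∀ i, f s(U i, W i) ≤ a i := fun i =>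
    label_le_of_endpoints_covered hORS hf (hUW.1 i) (hUX i) (hWY i) (hXa i) (hYa i)
  exact congrFun (Fin.eq_of_le_of_sum_succ_eq hle (hUW.2.trans ha.symm))

/-- If the matchings `M 0, …, M (t-1)` partition the edge set of `G` and satisfy the
ordered (ORS) property — for `i < j` no edge of `M j` has both endpoints covered by
`M i` — then each `M_a` is an *induced* matching of `H_s`: any edge `(U, W)` of `H_s`
whose two endpoints are matched by `M_a` satisfies `f (U i, W i) = a i` for every `i`
(hence belongs to `M_a`). -/
theorem Ma_is_induced_matching {V : Type*} [Fintype V] [DecidableEq V]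
    (G : SimpleGraph V) (t : ℕ) (M : Fin t → Finset (Sym2 V))
    (hsub : ∀ i, ↑(M i) ⊆ G.edgeSet)
    (hmatch : ∀ i, ∀ e ∈ M i, ∀ e' ∈ M i, e ≠ e' → ∀ v : V, v ∈ e → v ∉ e')
    (hdisj : ∀ i j, i ≠ j → Disjoint (M i) (M j))
    (hcover : ∀ e ∈ G.edgeSet, ∃ i, e ∈ M i)
    (hORS : ∀ i j : Fin t, i < j → ∀ e ∈ M j, ¬ (∀ v ∈ e, ∃ e' ∈ M i, v ∈ e'))
    (f : Sym2 V → Fin t) (hf : ∀ e ∈ G.edgeSet, e ∈ M (f e))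
    (k : ℕ) [NeZero k] (s : ℕ)
    (a : Fin k → Fin t) (ha : (∑ i, ((a i : ℕ) + 1)) = s)
    (U W : Fin k → V) (hUW : (Hgraph G f k s).Adj U W)
    (hU : ∃ X, MemMa G f k s a U X) (hW : ∃ X, MemMa G f k s a W X) :
    ∀ i, f s(U i, W i) = a i :=
  Ma_is_induced_matching_general G t M hORS f hf k s a ha U W hUW hU hW
end

section
/- Suppose there are constants c > 0, ε ∈ (0,1), C > 0 such that ORS(n, ⌈εn⌉) ≥ C·n^c for all sufficiently large n. Then for every fixed integer k ≥ 1 there is a constant C_k > 0 such that for all sufficiently large n, RS(n^k, ⌈εn⌉^k) ≥ C_k · n^{c(k−1)}; in particular, for N ranging over k-th powers, RS(N, ε^k N) ≥ Ω_k(N^{c(k−1)/k}). -/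
/-!
Take the `k`-th tensor power of an `(r,t)`-ORS graph with matchings `M₀, …, M_{t-1}`: its
vertices are `k`-tuples of vertices, and for an index tuple `I` the matching `M_I` consists of
the coordinatewise products of edges of `M_{I 1}, …, M_{I k}`. If `M_I` covers an edge of `M_J`,
the ordering condition in each coordinate forces `J ≤ I` coordinatewise, so the matchings `M_I`
whose index sum `∑ I` is a fixed `s` are induced. By pigeonhole some level `s` carries at least
`t^k / (k t)` tuples, whence `RS(n^k, r^k) ≥ t^{k-1} / k ≥ (C n^c)^{k-1} / k`.
-/

open Finset Filter

lemma Nat.sSup_mem_of_ne_zero {s : Set ℕ} (h : sSup s ≠ 0) : sSup s ∈ s := by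
  refine Nat.sSup_mem (Set.nonempty_iff_ne_empty.2 fun he => h ?_) (not_not.1 fun hb => h ?_)
  · simp [he]
  · simp [csSup_of_not_bddAbove hb]

lemma Sym2.mk_out {α : Type*} (e : Sym2 α) : s(e.out.1, e.out.2) = e :=
  Quot.out_eq e

lemma Sym2.isDiag_iff_out_fst_eq_out_snd {α : Type*} (e : Sym2 α) :
    e.IsDiag ↔ e.out.1 = e.out.2 := by
  conv_lhs => rw [← e.mk_out]
  exact Sym2.mk_isDiag_iff

section TensorEdge

variable {κ V : Type*}

/-- Of the `2^(k-1)` edges of the tensor power lying over the `k` edges `f l`, the one given by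
orienting every factor by `Sym2.out`. -/
noncomputable def tensorEdge (f : κ → Sym2 V) : Sym2 (κ → V) :=
  s(fun l => (f l).out.1, fun l => (f l).out.2)

lemma apply_mem_of_mem_tensorEdge {f : κ → Sym2 V} {x : κ → V} (hx : x ∈ tensorEdge f)
    (l : κ) : x l ∈ f l := by
  rcases Sym2.mem_iff.1 hx with rfl | rfl
  · exact Sym2.out_fst_mem _
  · exact Sym2.out_snd_mem _

lemma exists_mem_tensorEdge_apply_eq {f : κ → Sym2 V} {l : κ} {v : V} (hv : v ∈ f l) :
    ∃ x ∈ tensorEdge f, x l = v := by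
  rw [← (f l).mk_out, Sym2.mem_iff] at hv
  rcases hv with rfl | rfl
  · exact ⟨_, Sym2.mem_mk_left _ _, rfl⟩
  · exact ⟨_, Sym2.mem_mk_right _ _, rfl⟩

lemma tensorEdge_injective : Function.Injective (tensorEdge : (κ → Sym2 V) → Sym2 (κ → V)) := by
  intro f g hfg
  funext l
  rw [← (f l).mk_out, ← (g l).mk_out]
  rcases Sym2.eq_iff.1 hfg with ⟨h₁, h₂⟩ | ⟨h₁, h₂⟩
  · rw [congrFun h₁ l, congrFun h₂ l]
  · rw [congrFun h₁ l, congrFun h₂ l, Sym2.eq_swap]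

lemma tensorEdge_isDiag_iff {f : κ → Sym2 V} : (tensorEdge f).IsDiag ↔ ∀ l, (f l).IsDiag := by
  rw [tensorEdge, Sym2.mk_isDiag_iff, funext_iff]
  simp only [Sym2.isDiag_iff_out_fst_eq_out_snd]

end TensorEdge

section MatchingFamily

variable {V W ι ι' : Type*}

def CoversEdge (m : Finset (Sym2 V)) (e : Sym2 V) : Prop :=
  ∀ v ∈ e, ∃ e' ∈ m, v ∈ e'

structure IsMatchingFamily (r : ℕ) (M : ι → Finset (Sym2 V)) : Prop where
  card_eq : ∀ i, #(M i) = r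
  not_isDiag : ∀ i, ∀ e ∈ M i, ¬ e.IsDiag
  isMatching : ∀ i, ∀ e ∈ M i, ∀ e' ∈ M i, e ≠ e' → ∀ v ∈ e, v ∉ e'
  disjoint : ∀ i j, i ≠ j → Disjoint (M i) (M j)

/-- Each `M i` is an induced matching in the union of the family. -/
def IsInduced (M : ι → Finset (Sym2 V)) : Prop :=
  ∀ i j, ∀ e ∈ M j, CoversEdge (M i) e → e ∈ M i

def IsOrderedInduced [LT ι] (M : ι → Finset (Sym2 V)) : Prop :=
  ∀ i j, i < j → ∀ e ∈ M j, ¬ CoversEdge (M i) e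

lemma CoversEdge.mono {m m' : Finset (Sym2 V)} {e : Sym2 V} (h : CoversEdge m e) (hm : m ⊆ m') :
    CoversEdge m' e := fun v hv => (h v hv).imp fun _ he => ⟨hm he.1, he.2⟩

lemma Sym2.apply_mem_map_iff {f : V → W} (hf : Function.Injective f) {v : V} {e : Sym2 V} :
    f v ∈ e.map f ↔ v ∈ e := by
  simp [hf.eq_iff]

lemma coversEdge_map_iff (φ : V ↪ W) {m : Finset (Sym2 V)} {e : Sym2 V} :
    CoversEdge (m.map φ.sym2Map) (e.map φ) ↔ CoversEdge m e := by
  simp only [CoversEdge, Finset.mem_map, Function.Embedding.sym2Map_apply, Sym2.mem_map,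
    forall_exists_index, and_imp, forall_apply_eq_imp_iff₂, exists_exists_and_eq_and,
    φ.injective.eq_iff, exists_eq_right]

namespace IsMatchingFamily

variable {r : ℕ} {M : ι → Finset (Sym2 V)}

lemma of_matchingDecomp {n t : ℕ} {G : SimpleGraph (Fin n)} {M : Fin t → Finset (Sym2 (Fin n))}
    (h : MatchingDecomp r G M) : IsMatchingFamily r M where
  card_eq := h.1
  not_isDiag i _ he := G.not_isDiag_of_mem_edgeSet (h.2.1 i he)
  isMatching := h.2.2.1
  disjoint := h.2.2.2.1

lemma comp (hM : IsMatchingFamily r M) (σ : ι' ↪ ι) : IsMatchingFamily r (M ∘ σ) where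
  card_eq i := hM.card_eq (σ i)
  not_isDiag i := hM.not_isDiag (σ i)
  isMatching i := hM.isMatching (σ i)
  disjoint _ _ hij := hM.disjoint _ _ (σ.injective.ne hij)

lemma map (hM : IsMatchingFamily r M) (φ : V ↪ W) :
    IsMatchingFamily r fun i => (M i).map φ.sym2Map where
  card_eq i := by rw [card_map, hM.card_eq]
  not_isDiag i := by
    simpa [Sym2.isDiag_map φ.injective] using hM.not_isDiag i
  isMatching i := by
    simp only [Finset.mem_map, Function.Embedding.sym2Map_apply]
    rintro _ ⟨e, he, rfl⟩ _ ⟨e', he', rfl⟩ hne _ hw hw'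
    obtain ⟨v, hv, rfl⟩ := Sym2.mem_map.1 hw
    exact hM.isMatching i e he e' he' (fun h => hne (h ▸ rfl)) v hv
      ((Sym2.apply_mem_map_iff φ.injective).1 hw')
  disjoint i j hij := by
    rw [Finset.disjoint_map]
    exact hM.disjoint i j hij

lemma card_le [Fintype ι] [Fintype V] (hM : IsMatchingFamily r M) (hr : r ≠ 0) :
    Fintype.card ι ≤ Fintype.card (Sym2 V) := by
  have hne : ∀ i, (M i).Nonempty := fun i => card_pos.1 (by rw [hM.card_eq]; omega)
  choose f hf using hne
  refine Fintype.card_le_of_injective f fun i j hij => ?_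
  by_contra hne
  exact disjoint_left.1 (hM.disjoint i j hne) (hf i) (hij ▸ hf j)

lemma subfamily {r' : ℕ} (hM : IsMatchingFamily r M) {N : ι → Finset (Sym2 V)}
    (hNM : ∀ i, N i ⊆ M i) (hN : ∀ i, #(N i) = r') : IsMatchingFamily r' N where
  card_eq := hN
  not_isDiag i e he := hM.not_isDiag i e (hNM i he)
  isMatching i e he e' he' := hM.isMatching i e (hNM i he) e' (hNM i he')
  disjoint i j hij := (hM.disjoint i j hij).mono (hNM i) (hNM j)

end IsMatchingFamily

namespace IsInduced

variable {M : ι → Finset (Sym2 V)}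

lemma of_rsProperty {n t r : ℕ} {G : SimpleGraph (Fin n)} {M : Fin t → Finset (Sym2 (Fin n))}
    (hd : MatchingDecomp r G M) (h : RSProperty G M) : IsInduced M :=
  fun i j e he hcov => h i e (hd.2.1 j he) hcov

lemma comp (hM : IsInduced M) (σ : ι' → ι) : IsInduced (M ∘ σ) :=
  fun i j => hM (σ i) (σ j)

lemma map (hM : IsInduced M) (φ : V ↪ W) : IsInduced fun i => (M i).map φ.sym2Map := by
  rintro i j _ he' hcov
  obtain ⟨e, he, rfl⟩ := Finset.mem_map.1 he'
  exact mem_map_of_mem _ (hM i j e he ((coversEdge_map_iff φ).1 hcov))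

lemma subfamily {r : ℕ} (hind : IsInduced M) (hM : IsMatchingFamily r M)
    {N : ι → Finset (Sym2 V)} (hNM : ∀ i, N i ⊆ M i) : IsInduced N := by
  intro i j e he hcov
  obtain rfl : i = j := by
    by_contra hij
    exact disjoint_left.1 (hM.disjoint i j hij) (hind i j e (hNM j he) (hcov.mono (hNM i)))
      (hNM j he)
  exact he

end IsInduced

end MatchingFamily

lemma isRSGraph_of_isMatchingFamily {n t r : ℕ} {M : Fin t → Finset (Sym2 (Fin n))}
    (hM : IsMatchingFamily r M) (hind : IsInduced M) : IsRSGraph n r t := by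
  have hedge : ∀ e, e ∈ (SimpleGraph.fromEdgeSet (⋃ i, (M i : Set (Sym2 (Fin n))))).edgeSet ↔
      ∃ i, e ∈ M i := fun e => by
    simp only [SimpleGraph.edgeSet_fromEdgeSet, Set.mem_sdiff, Set.mem_iUnion, mem_coe,
      and_iff_left_iff_imp, forall_exists_index]
    exact fun i he => hM.not_isDiag i e he
  refine ⟨_, M, ⟨hM.card_eq, fun i e he => (hedge e).2 ⟨i, he⟩, hM.isMatching, hM.disjoint,
    fun e he => (hedge e).1 he⟩, fun i e he hcov => ?_⟩
  obtain ⟨j, hj⟩ := (hedge e).1 he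
  exact hind i j e hj hcov

lemma IsMatchingFamily.isRSGraph {V ι : Type*} [Fintype V] [Fintype ι] {r : ℕ}
    {M : ι → Finset (Sym2 V)} (hM : IsMatchingFamily r M) (hind : IsInduced M) :
    IsRSGraph (Fintype.card V) r (Fintype.card ι) := by
  let φ := (Fintype.equivFin V).toEmbedding
  let σ := (Fintype.equivFin ι).symm.toEmbedding
  exact isRSGraph_of_isMatchingFamily ((hM.comp σ).map φ) ((hind.comp σ).map φ)

lemma IsRSGraph.mono {n r r' t : ℕ} (h : IsRSGraph n r t) (hr : r' ≤ r) : IsRSGraph n r' t := by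
  obtain ⟨G, M, hd, hrs⟩ := h
  have hM := IsMatchingFamily.of_matchingDecomp hd
  choose N hNM hN using fun i => exists_subset_card_eq (hM.card_eq i ▸ hr : r' ≤ #(M i))
  exact isRSGraph_of_isMatchingFamily (hM.subfamily hNM hN)
    ((IsInduced.of_rsProperty hd hrs).subfamily hM hNM)

lemma bddAbove_isRSGraph (n : ℕ) {r : ℕ} (hr : r ≠ 0) : BddAbove {t | IsRSGraph n r t} := by
  refine ⟨Fintype.card (Sym2 (Fin n)), fun t ⟨_, _, hd, _⟩ => ?_⟩
  simpa using (IsMatchingFamily.of_matchingDecomp hd).card_le hr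

lemma le_RSnum {n r t : ℕ} (hr : r ≠ 0) (h : IsRSGraph n r t) : t ≤ RSnum n r :=
  le_csSup (bddAbove_isRSGraph n hr) h

lemma RSnum_le_RSnum_of_le {n r r' : ℕ} (hr' : r' ≠ 0) (h : r' ≤ r) :
    RSnum n r ≤ RSnum n r' := by
  by_cases h0 : RSnum n r = 0
  · simp [h0]
  · exact le_RSnum hr' ((Nat.sSup_mem_of_ne_zero h0 : IsRSGraph n r _).mono h)

section TensorPower

variable {κ V ι : Type*} [Fintype κ] {M : ι → Finset (Sym2 V)}

open Classical in
noncomputable def tensorMatching (M : ι → Finset (Sym2 V)) (I : κ → ι) :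
    Finset (Sym2 (κ → V)) :=
  (Fintype.piFinset fun l => M (I l)).image tensorEdge

lemma mem_tensorMatching {I : κ → ι} {e : Sym2 (κ → V)} :
    e ∈ tensorMatching M I ↔ ∃ f : κ → Sym2 V, (∀ l, f l ∈ M (I l)) ∧ tensorEdge f = e := by
  simp [tensorMatching]

lemma CoversEdge.of_tensorMatching {I : κ → ι} {f : κ → Sym2 V}
    (h : CoversEdge (tensorMatching M I) (tensorEdge f)) (l : κ) : CoversEdge (M (I l)) (f l) := by
  intro v hv
  obtain ⟨x, hx, rfl⟩ := exists_mem_tensorEdge_apply_eq hv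
  obtain ⟨_, he, hxe⟩ := h x hx
  obtain ⟨g, hg, rfl⟩ := mem_tensorMatching.1 he
  exact ⟨g l, hg l, apply_mem_of_mem_tensorEdge hxe l⟩

lemma IsMatchingFamily.tensorMatching [Nonempty κ] {r : ℕ} (hM : IsMatchingFamily r M) :
    IsMatchingFamily (r ^ Fintype.card κ) (tensorMatching (κ := κ) M) where
  card_eq I := by
    classical
    rw [_root_.tensorMatching, card_image_of_injective _ tensorEdge_injective,
      Fintype.card_piFinset]
    simp [hM.card_eq]
  not_isDiag I e he hdiag := by
    obtain ⟨f, hf, rfl⟩ := mem_tensorMatching.1 he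
    obtain ⟨l⟩ := ‹Nonempty κ›
    exact hM.not_isDiag _ _ (hf l) (tensorEdge_isDiag_iff.1 hdiag l)
  isMatching I e he e' he' hne x hx hx' := by
    obtain ⟨f, hf, rfl⟩ := mem_tensorMatching.1 he
    obtain ⟨g, hg, rfl⟩ := mem_tensorMatching.1 he'
    refine hne (congrArg tensorEdge (funext fun l => ?_))
    by_contra hfg
    exact hM.isMatching _ _ (hf l) _ (hg l) hfg _ (apply_mem_of_mem_tensorEdge hx l)
      (apply_mem_of_mem_tensorEdge hx' l)
  disjoint I J hIJ := by
    obtain ⟨l, hl⟩ := Function.ne_iff.1 hIJ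
    refine disjoint_left.2 fun e he he' => ?_
    obtain ⟨f, hf, rfl⟩ := mem_tensorMatching.1 he
    obtain ⟨g, hg, hgf⟩ := mem_tensorMatching.1 he'
    obtain rfl := tensorEdge_injective hgf
    exact disjoint_left.1 (hM.disjoint _ _ hl) (hf l) (hg l)

abbrev SumLevel (κ : Type*) [Fintype κ] (t s : ℕ) :=
  {I : κ → Fin t // ∑ l, (I l : ℕ) = s}

/-- If `I` covers an edge of `J`, then `J ≤ I` coordinatewise; equal sums force `I = J`. -/
lemma IsOrderedInduced.isInduced_tensorMatching {t : ℕ} {M : Fin t → Finset (Sym2 V)}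
    (hM : IsOrderedInduced M) (s : ℕ) :
    IsInduced fun I : SumLevel κ t s => tensorMatching M I.1 := by
  intro I J e he hcov
  obtain ⟨f, hf, rfl⟩ := mem_tensorMatching.1 he
  have hle : ∀ l, (J.1 l : ℕ) ≤ I.1 l := fun l =>
    not_lt.1 fun hlt => hM _ _ hlt _ (hf l) (hcov.of_tensorMatching l)
  have hsum : ∑ l, (J.1 l : ℕ) = ∑ l, (I.1 l : ℕ) := J.2.trans I.2.symm
  obtain rfl : I = J := Subtype.ext <| funext fun l => Fin.ext
    ((sum_eq_sum_iff_of_le fun l _ => hle l).1 hsum l (mem_univ l)).symm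
  exact he

end TensorPower

lemma exists_pow_le_mul_card_sumLevel {k : ℕ} (hk : k ≠ 0) (t : ℕ) :
    ∃ s, t ^ k ≤ k * t * Fintype.card (SumLevel (Fin k) t s) := by
  rcases Nat.eq_zero_or_pos t with rfl | ht
  · exact ⟨0, by simp [zero_pow hk]⟩
  have hmaps : ∀ I ∈ (univ : Finset (Fin k → Fin t)), ∑ l, (I l : ℕ) ∈ range (k * t) := by
    intro I _
    rw [mem_range]
    calc ∑ l, (I l : ℕ) < ∑ _l : Fin k, t :=
          sum_lt_sum_of_nonempty (univ_nonempty_iff.2 ⟨⟨0, by omega⟩⟩) fun l _ => (I l).2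
      _ = k * t := by simp
  have hkt : (0 : ℝ) < k * t := by positivity
  obtain ⟨s, -, hs⟩ := exists_le_card_fiber_of_nsmul_le_card_of_maps_to hmaps
    (nonempty_range_iff.2 (by positivity)) (b := (t : ℝ) ^ k / (k * t))
    (by simp [mul_div_cancel₀ _ hkt.ne'])
  refine ⟨s, ?_⟩
  rw [Fintype.card_subtype]
  exact_mod_cast (div_le_iff₀' hkt).1 hs

theorem ORSnum_pow_le_mul_RSnum {n r k : ℕ} (hr : r ≠ 0) (hk : k ≠ 0) :
    ORSnum n r ^ k ≤ k * ORSnum n r * RSnum (n ^ k) (r ^ k) := by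
  set t := ORSnum n r
  by_cases ht : t = 0
  · simp [ht, zero_pow hk]
  obtain ⟨G, M, hd, hors⟩ : IsORSGraph n r t := Nat.sSup_mem_of_ne_zero ht
  have hM := IsMatchingFamily.of_matchingDecomp hd
  have : Nonempty (Fin k) := ⟨⟨0, by omega⟩⟩
  obtain ⟨s, hs⟩ := exists_pow_le_mul_card_sumLevel hk t
  have hrs : IsRSGraph (n ^ k) (r ^ k) (Fintype.card (SumLevel (Fin k) t s)) := by
    have hT := (hM.tensorMatching (κ := Fin k)).comp
      (Function.Embedding.subtype fun I : Fin k → Fin t => ∑ l, (I l : ℕ) = s)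
    simpa using hT.isRSGraph (IsOrderedInduced.isInduced_tensorMatching hors s)
  exact hs.trans (Nat.mul_le_mul_left _ (le_RSnum (pow_ne_zero k hr) hrs))

theorem const_mul_rpow_le_RSnum {c C : ℝ} (hC : 0 < C) {n r k : ℕ} (hn : n ≠ 0) (hr : r ≠ 0)
    (hk : k ≠ 0) (h : C * (n : ℝ) ^ c ≤ ORSnum n r) :
    C ^ (k - 1) / k * (n : ℝ) ^ (c * ((k : ℝ) - 1)) ≤ RSnum (n ^ k) (r ^ k) := by
  have hpow_le : (ORSnum n r : ℝ) ^ k ≤ k * ORSnum n r * RSnum (n ^ k) (r ^ k) := by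
    exact_mod_cast ORSnum_pow_le_mul_RSnum hr hk
  set t : ℝ := (ORSnum n r : ℝ)
  set T : ℝ := (RSnum (n ^ k) (r ^ k) : ℝ)
  have ht : 0 < t := lt_of_lt_of_le (by positivity) h
  have hkR : (0 : ℝ) < k := by positivity
  have hkey : t ^ (k - 1) * t ≤ (k * T) * t := by
    rwa [← pow_succ, Nat.sub_add_cancel (Nat.one_le_iff_ne_zero.2 hk), mul_right_comm]
  have hpow : (n : ℝ) ^ (c * ((k : ℝ) - 1)) = ((n : ℝ) ^ c) ^ (k - 1) := by
    rw [Real.rpow_mul (Nat.cast_nonneg n), ← Real.rpow_natCast,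
      Nat.cast_sub (Nat.one_le_iff_ne_zero.2 hk), Nat.cast_one]
  rw [div_mul_eq_mul_div, div_le_iff₀' hkR, hpow, ← mul_pow]
  calc (C * (n : ℝ) ^ c) ^ (k - 1) ≤ t ^ (k - 1) := pow_le_pow_left₀ (by positivity) h _
    _ ≤ k * T := le_of_mul_le_mul_right hkey ht

theorem rs_power_lower_bound_of_ors_general
    (c ε C : ℝ) (hε0 : 0 < ε) (hC : 0 < C)
    (h : ∀ᶠ n : ℕ in Filter.atTop,
      C * (n : ℝ) ^ c ≤ (ORSnum n ⌈ε * (n : ℝ)⌉₊ : ℝ))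
    (k : ℕ) (hk : 1 ≤ k) :
    (∃ Ck : ℝ, 0 < Ck ∧
      ∀ᶠ n : ℕ in Filter.atTop,
        Ck * (n : ℝ) ^ (c * ((k : ℝ) - 1)) ≤ (RSnum (n ^ k) (⌈ε * (n : ℝ)⌉₊ ^ k) : ℝ)) ∧
    (∃ C' : ℝ, 0 < C' ∧
      ∀ᶠ n : ℕ in Filter.atTop,
        C' * ((n ^ k : ℕ) : ℝ) ^ (c * ((k : ℝ) - 1) / (k : ℝ)) ≤
          (RSnum (n ^ k) ⌈ε ^ k * ((n ^ k : ℕ) : ℝ)⌉₊ : ℝ)) := by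
  have hCk : 0 < C ^ (k - 1) / k := by positivity
  have hbound : ∀ᶠ n : ℕ in atTop, C ^ (k - 1) / k * (n : ℝ) ^ (c * ((k : ℝ) - 1)) ≤
      RSnum (n ^ k) (⌈ε * (n : ℝ)⌉₊ ^ k) := by
    filter_upwards [h, eventually_ne_atTop 0] with n hn hn0
    exact const_mul_rpow_le_RSnum hC hn0 (by positivity) (by omega) hn
  refine ⟨⟨_, hCk, hbound⟩, _, hCk, ?_⟩
  filter_upwards [hbound, eventually_ne_atTop 0] with n hn hn0
  have hN : ((n ^ k : ℕ) : ℝ) ^ (c * ((k : ℝ) - 1) / k) = (n : ℝ) ^ (c * ((k : ℝ) - 1)) := by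
    rw [Nat.cast_pow, ← Real.rpow_natCast, ← Real.rpow_mul (Nat.cast_nonneg n),
      mul_div_cancel₀ _ (by positivity)]
  have hceil : ⌈ε ^ k * ((n ^ k : ℕ) : ℝ)⌉₊ ≤ ⌈ε * (n : ℝ)⌉₊ ^ k := by
    rw [Nat.ceil_le, Nat.cast_pow, Nat.cast_pow, ← mul_pow]
    exact pow_le_pow_left₀ (by positivity) (Nat.le_ceil _) _
  rw [hN]
  exact hn.trans (by exact_mod_cast RSnum_le_RSnum_of_le (by positivity) hceil)

/-- If `ORS(n, ⌈εn⌉) ≥ C·n^c` for all large `n`, then for every fixed `k ≥ 1` there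
is `C_k > 0` with `RS(n^k, ⌈εn⌉^k) ≥ C_k·n^{c(k-1)}` for all large `n`; in particular,
for `N = n^k` a `k`-th power, `RS(N, ⌈ε^k N⌉) ≥ C'·N^{c(k-1)/k}`. -/
theorem rs_power_lower_bound_of_ors
    (c ε C : ℝ) (hc : 0 < c) (hε0 : 0 < ε) (hε1 : ε < 1) (hC : 0 < C)
    (h : ∀ᶠ n : ℕ in Filter.atTop,
      C * (n : ℝ) ^ c ≤ (ORSnum n ⌈ε * (n : ℝ)⌉₊ : ℝ))
    (k : ℕ) (hk : 1 ≤ k) :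
    (∃ Ck : ℝ, 0 < Ck ∧
      ∀ᶠ n : ℕ in Filter.atTop,
        Ck * (n : ℝ) ^ (c * ((k : ℝ) - 1)) ≤ (RSnum (n ^ k) (⌈ε * (n : ℝ)⌉₊ ^ k) : ℝ)) ∧
    (∃ C' : ℝ, 0 < C' ∧
      ∀ᶠ n : ℕ in Filter.atTop,
        C' * ((n ^ k : ℕ) : ℝ) ^ (c * ((k : ℝ) - 1) / (k : ℝ)) ≤
          (RSnum (n ^ k) ⌈ε ^ k * ((n ^ k : ℕ) : ℝ)⌉₊ : ℝ)) :=
  rs_power_lower_bound_of_ors_general c ε C hε0 hC h k hk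
end
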